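/- arXiv:1406.3715 — 3 statements merged into one kernel-verified Lean document; each statement's English description precedes it below -/
import Mathlib

section
/- Let ν be a Radon measure on [0,1] with ν(I) ≤ |I|^α for all dyadic intervals I, and let ν_n = Σ_{j=1}^{N} ν(I_{j,n}) δ_{j/N} with N = 2^n and I_{j,n} = [(j−1)/N, j/N) (with the last interval closed). Then for any subinterval I of [0,1]: if |I| < 1/N then ν_n(I) ≤ 1/N^α, and if |I| ≥ 1/N then ν_n(I) ≤ 3|I|^α. -/
/-!
The point `j / 2^n` carries the mass of the dyadic interval `I_{j,n}` to its left. If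
`|I| < 2^{-n}`, then `I` contains at most one such point. Otherwise pick `m ≤ n` with
`2^{-m} ≤ |I| ≤ 2^{1-m}`: the indices of the points in `I` differ by at most `2 · 2^{n-m}`, so
their intervals lie in at most three ancestors of generation `m`, each of mass at most
`2^{-mα} ≤ |I|^α`.
-/

open MeasureTheory

/-- The dyadic interval of generation `n` and index `j` (`1 ≤ j ≤ 2^n`):
`[(j-1)/2^n, j/2^n)` for `j < 2^n`, and `[(2^n-1)/2^n, 1]` for `j = 2^n`. -/
def dyadicInterval (n j : ℕ) : Set ℝ :=
  if j = 2 ^ n then Set.Icc ((2 ^ n - 1 : ℝ) / 2 ^ n) 1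
  else Set.Ico ((j - 1 : ℝ) / 2 ^ n) ((j : ℝ) / 2 ^ n)

/-- The `n`-step discrete approximation `ν_n = ∑_{j=1}^{2^n} ν(I_{j,n}) δ_{j/2^n}`. -/
noncomputable def stepApprox (ν : Measure ℝ) (n : ℕ) : Measure ℝ :=
  Measure.sum (fun j : Fin (2 ^ n) =>
    ν (dyadicInterval n (j + 1)) • Measure.dirac (((j : ℕ) + 1 : ℝ) / 2 ^ n))

/-- The `min` puts `x = 1` into the last, closed, interval. -/
noncomputable def dyadicIndex (n : ℕ) (x : ℝ) : ℕ := min (⌊2 ^ n * x⌋₊ + 1) (2 ^ n)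

lemma mem_dyadicInterval_iff {n j : ℕ} (hj1 : 1 ≤ j) (hjn : j ≤ 2 ^ n) {x : ℝ} :
    x ∈ dyadicInterval n j ↔ x ∈ Set.Icc 0 1 ∧ dyadicIndex n x = j := by
  have hN : (0 : ℝ) < 2 ^ n := by positivity
  have hjN : (j : ℝ) ≤ 2 ^ n := by exact_mod_cast hjn
  have hj : ((j - 1 : ℕ) : ℝ) = j - 1 := by push_cast [hj1]; ring
  have hN1 : ((2 ^ n - 1 : ℕ) : ℝ) = 2 ^ n - 1 := by push_cast [Nat.one_le_two_pow]; ring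
  unfold dyadicInterval dyadicIndex
  split_ifs with h <;>
    simp only [Set.mem_Icc, Set.mem_Ico, div_le_iff₀ hN, lt_div_iff₀ hN]
  · constructor
    · rintro ⟨hx0, hx1⟩
      have hfl : 2 ^ n - 1 ≤ ⌊2 ^ n * x⌋₊ := Nat.le_floor (by rw [hN1]; linarith)
      exact ⟨⟨by nlinarith, hx1⟩, by omega⟩
    · rintro ⟨⟨h0, h1⟩, hx⟩
      have hfl : ((2 ^ n - 1 : ℕ) : ℝ) ≤ ⌊2 ^ n * x⌋₊ := Nat.cast_le.mpr (by omega)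
      have hlo := Nat.floor_le (mul_nonneg hN.le h0)
      exact ⟨by linarith, h1⟩
  · constructor
    · rintro ⟨hx0, hx1⟩
      have hfl : ⌊2 ^ n * x⌋₊ = j - 1 :=
        (Nat.floor_eq_iff (by nlinarith)).2 ⟨by rw [hj]; linarith, by rw [hj]; linarith⟩
      exact ⟨⟨by nlinarith, by nlinarith⟩, by omega⟩
    · rintro ⟨⟨h0, h1⟩, hx⟩
      have hfl : ((⌊2 ^ n * x⌋₊ : ℕ) : ℝ) = j - 1 := by rw [← hj]; congr 1; omega
      have hlo := Nat.floor_le (mul_nonneg hN.le h0)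
      have hhi := Nat.lt_floor_add_one (2 ^ n * x)
      constructor <;> linarith

/-- Index of the ancestor, `k` generations up, of the dyadic interval of index `j`. -/
def dyadicParent (k j : ℕ) : ℕ := (j - 1) / 2 ^ k + 1

lemma dyadicParent_le {m k j : ℕ} (hj : j ≤ 2 ^ (m + k)) : dyadicParent k j ≤ 2 ^ m := by
  have : (j - 1) / 2 ^ k < 2 ^ m :=
    (Nat.div_lt_iff_lt_mul (by positivity)).2
      (by rw [← pow_add]; have := (m + k).one_le_two_pow; omega)
  unfold dyadicParent; omega

lemma Nat.min_div_add_one {a M K : ℕ} (hM : 0 < M) (hK : 0 < K) :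
    min (a / K + 1) M = (min (a + 1) (M * K) - 1) / K + 1 := by
  rcases lt_or_ge a (M * K) with h | h
  · have : a / K < M := (Nat.div_lt_iff_lt_mul hK).2 h
    rw [min_eq_left (by omega), min_eq_left h, Nat.add_sub_cancel]
  · have h1 : M ≤ a / K := (Nat.le_div_iff_mul_le hK).2 h
    have h2 : (M * K - 1) / K = M - 1 := by
      refine Nat.div_eq_of_lt_le ?_ ?_
      · rw [Nat.sub_mul, one_mul]; omega
      · rw [Nat.sub_add_cancel hM]; exact Nat.sub_lt (Nat.mul_pos hM hK) one_pos
    rw [min_eq_right (by omega), min_eq_right (h.trans a.le_succ), h2]; omega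

lemma dyadicIndex_eq_dyadicParent (m k : ℕ) (x : ℝ) :
    dyadicIndex m x = dyadicParent k (dyadicIndex (m + k) x) := by
  have hfloor : ⌊2 ^ m * x⌋₊ = ⌊2 ^ (m + k) * x⌋₊ / 2 ^ k := by
    rw [← Nat.floor_div_natCast, pow_add]; push_cast; field_simp
  unfold dyadicIndex dyadicParent
  rw [hfloor]
  have := Nat.min_div_add_one (a := ⌊2 ^ (m + k) * x⌋₊) (Nat.two_pow_pos m)
    (Nat.two_pow_pos k)
  rwa [← pow_add] at this

lemma measurableSet_dyadicInterval (n j : ℕ) : MeasurableSet (dyadicInterval n j) := by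
  unfold dyadicInterval; split_ifs
  exacts [measurableSet_Icc, measurableSet_Ico]

lemma pairwiseDisjoint_dyadicInterval (n : ℕ) :
    (Set.Icc 1 (2 ^ n)).PairwiseDisjoint (dyadicInterval n) := by
  intro i hi j hj hij
  refine Set.disjoint_left.2 fun x hxi hxj => hij ?_
  rw [mem_dyadicInterval_iff hi.1 hi.2] at hxi
  rw [mem_dyadicInterval_iff hj.1 hj.2] at hxj
  exact hxi.2.symm.trans hxj.2

lemma dyadicInterval_subset_dyadicParent {m k j : ℕ} (hj1 : 1 ≤ j) (hj : j ≤ 2 ^ (m + k)) :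
    dyadicInterval (m + k) j ⊆ dyadicInterval m (dyadicParent k j) := by
  intro x hx
  rw [mem_dyadicInterval_iff hj1 hj] at hx
  rw [mem_dyadicInterval_iff (by simp [dyadicParent]) (dyadicParent_le hj),
    dyadicIndex_eq_dyadicParent m k, hx.2]
  exact ⟨hx.1, rfl⟩

lemma sum_measure_dyadicInterval_le_sum_image_dyadicParent (ν : Measure ℝ) {m k : ℕ}
    {S : Finset ℕ} (hS : ↑S ⊆ Set.Icc 1 (2 ^ (m + k))) :
    ∑ j ∈ S, ν (dyadicInterval (m + k) j) ≤
      ∑ t ∈ S.image (dyadicParent k), ν (dyadicInterval m t) := by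
  classical
  calc ∑ j ∈ S, ν (dyadicInterval (m + k) j)
      = ν (⋃ j ∈ S, dyadicInterval (m + k) j) :=
        (measure_biUnion_finset ((pairwiseDisjoint_dyadicInterval _).subset hS)
          fun j _ => measurableSet_dyadicInterval _ j).symm
    _ ≤ ν (⋃ t ∈ S.image (dyadicParent k), dyadicInterval m t) := by
        refine measure_mono (Set.iUnion₂_subset fun j hj => ?_)
        exact (dyadicInterval_subset_dyadicParent (hS hj).1 (hS hj).2).trans
          (Set.subset_biUnion_of_mem (u := fun t => dyadicInterval m t)
            (Finset.mem_image_of_mem _ hj))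
    _ ≤ _ := measure_biUnion_finset_le _ _

lemma card_image_dyadicParent_le_three (k : ℕ) {S : Finset ℕ}
    (hS : ∀ i ∈ S, ∀ j ∈ S, j ≤ i + 2 * 2 ^ k) :
    (S.image (dyadicParent k)).card ≤ 3 := by
  rcases S.eq_empty_or_nonempty with rfl | hne
  · simp
  set a := S.min' hne
  calc (S.image (dyadicParent k)).card
      ≤ (Finset.Icc (dyadicParent k a) (dyadicParent k a + 2)).card := by
        refine Finset.card_le_card fun t ht => ?_
        obtain ⟨j, hj, rfl⟩ := Finset.mem_image.1 ht
        have haj : a ≤ j := S.min'_le j hj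
        have hja : j - 1 ≤ (a - 1) + 2 ^ k * 2 := by
          have := hS a (S.min'_mem hne) j hj; omega
        have h1 := Nat.div_le_div_right (c := 2 ^ k) (Nat.sub_le_sub_right haj 1)
        have h2 := Nat.div_le_div_right (c := 2 ^ k) hja
        rw [Nat.add_mul_div_left _ _ (Nat.two_pow_pos k)] at h2
        simp only [Finset.mem_Icc, dyadicParent]
        omega
    _ = 3 := by rw [Nat.card_Icc]; omega

open scoped Classical in
lemma stepApprox_apply (ν : Measure ℝ) (n : ℕ) (s : Set ℝ) :
    stepApprox ν n s =
      ∑ j ∈ (Finset.Icc 1 (2 ^ n)).filter (fun j : ℕ => (j : ℝ) / 2 ^ n ∈ s),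
        ν (dyadicInterval n j) := by
  set g : ℕ → ENNReal := fun j => if (j : ℝ) / 2 ^ n ∈ s then ν (dyadicInterval n j) else 0
  calc stepApprox ν n s = ∑ j : Fin (2 ^ n), g (j + 1) := by
        rw [stepApprox, Measure.sum_apply_of_countable, tsum_fintype]
        refine Finset.sum_congr rfl fun j _ => ?_
        simp [g, Measure.dirac_apply, Set.indicator_apply]
    _ = ∑ j ∈ Finset.Icc 1 (2 ^ n), g j := by
        rw [Fin.sum_univ_eq_sum_range (fun j => g (j + 1)), Finset.range_eq_Ico,
          Finset.sum_Ico_add', Finset.Ico_add_one_right_eq_Icc, zero_add]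
    _ = _ := Finset.sum_filter _ _ |>.symm

lemma natCast_le_add_two_pow_mul_diam {n i j : ℕ} {s : Set ℝ} (hs : Bornology.IsBounded s)
    (hi : (i / 2 ^ n : ℝ) ∈ s) (hj : (j / 2 ^ n : ℝ) ∈ s) :
    (j : ℝ) ≤ i + 2 ^ n * Metric.diam s := by
  have h := (le_abs_self _).trans ((Real.dist_eq _ _).symm.le.trans
    (Metric.dist_le_diam_of_mem hs hj hi))
  rw [← sub_div, div_le_iff₀ (by positivity)] at h
  linarith

lemma exists_one_le_two_pow_mul_le_two {d : ℝ} (hd : d ≤ 2) {n : ℕ} (h : 1 ≤ 2 ^ n * d) :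
    ∃ m ≤ n, 1 ≤ 2 ^ m * d ∧ 2 ^ m * d ≤ 2 := by
  induction n with
  | zero => exact ⟨0, le_rfl, by simpa using h, by simpa using hd⟩
  | succ n ih =>
    by_cases hn : 1 ≤ 2 ^ n * d
    · obtain ⟨m, hm, hm'⟩ := ih hn
      exact ⟨m, hm.trans n.le_succ, hm'⟩
    · exact ⟨n + 1, le_rfl, h, by rw [pow_succ]; linarith⟩

section Frostman

variable {ν : Measure ℝ} {n : ℕ} {s : Set ℝ}

lemma stepApprox_le_of_diam_lt {c : ENNReal}
    (hν : ∀ j, 1 ≤ j → j ≤ 2 ^ n → ν (dyadicInterval n j) ≤ c)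
    (hs : Bornology.IsBounded s) (hd : Metric.diam s < 1 / 2 ^ n) : stepApprox ν n s ≤ c := by
  classical
  have hd' : 2 ^ n * Metric.diam s < 1 := by rwa [lt_div_iff₀ (by positivity), mul_comm] at hd
  rw [stepApprox_apply]
  set S := (Finset.Icc 1 (2 ^ n)).filter (fun j : ℕ => (j : ℝ) / 2 ^ n ∈ s)
  have hS : S.card ≤ 1 := Finset.card_le_one.2 fun i hi j hj => by
    have hij := natCast_le_add_two_pow_mul_diam hs (Finset.mem_filter.1 hi).2
      (Finset.mem_filter.1 hj).2
    have hji := natCast_le_add_two_pow_mul_diam hs (Finset.mem_filter.1 hj).2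
      (Finset.mem_filter.1 hi).2
    have : j < i + 1 := by exact_mod_cast (by linarith : (j : ℝ) < i + 1)
    have : i < j + 1 := by exact_mod_cast (by linarith : (i : ℝ) < j + 1)
    omega
  calc ∑ j ∈ S, ν (dyadicInterval n j)
      ≤ S.card • c := Finset.sum_le_card_nsmul _ _ _ fun j hj =>
        hν j (Finset.mem_Icc.1 (Finset.mem_filter.1 hj).1).1
          (Finset.mem_Icc.1 (Finset.mem_filter.1 hj).1).2
    _ ≤ 1 • c := nsmul_le_nsmul_left zero_le hS
    _ = c := one_nsmul c

lemma stepApprox_le_three_mul_diam_rpow {α : ℝ} (hα : 0 ≤ α)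
    (hν : ∀ n j : ℕ, 1 ≤ j → j ≤ 2 ^ n →
      ν (dyadicInterval n j) ≤ ENNReal.ofReal ((1 / 2 ^ n : ℝ) ^ α))
    (hs : s ⊆ Set.Icc 0 1) (hd : 1 / 2 ^ n ≤ Metric.diam s) :
    stepApprox ν n s ≤ ENNReal.ofReal (3 * Metric.diam s ^ α) := by
  classical
  have hbdd : Bornology.IsBounded s := Metric.isBounded_Icc (0 : ℝ) 1 |>.subset hs
  have hd1 : Metric.diam s ≤ 1 := by
    simpa [Real.diam_Icc zero_le_one] using Metric.diam_mono hs (Metric.isBounded_Icc (0 : ℝ) 1)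
  obtain ⟨m, hmn, hm1, hm2⟩ := exists_one_le_two_pow_mul_le_two (by linarith)
    (by rwa [div_le_iff₀ (by positivity), mul_comm] at hd)
  obtain ⟨k, rfl⟩ := Nat.exists_eq_add_of_le hmn
  rw [stepApprox_apply]
  set S := (Finset.Icc 1 (2 ^ (m + k))).filter (fun j : ℕ => (j : ℝ) / 2 ^ (m + k) ∈ s)
  have hS : ↑S ⊆ Set.Icc 1 (2 ^ (m + k)) := fun j hj =>
    Finset.mem_Icc.1 (Finset.mem_filter.1 hj).1
  have hspread : ∀ i ∈ S, ∀ j ∈ S, j ≤ i + 2 * 2 ^ k := fun i hi j hj => by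
    have h := natCast_le_add_two_pow_mul_diam hbdd (Finset.mem_filter.1 hi).2
      (Finset.mem_filter.1 hj).2
    have : (2 : ℝ) ^ (m + k) * Metric.diam s ≤ 2 * 2 ^ k := by
      rw [pow_add, mul_right_comm]
      exact mul_le_mul_of_nonneg_right hm2 (by positivity)
    exact_mod_cast (by linarith : (j : ℝ) ≤ i + 2 * 2 ^ k)
  calc ∑ j ∈ S, ν (dyadicInterval (m + k) j)
      ≤ ∑ t ∈ S.image (dyadicParent k), ν (dyadicInterval m t) :=
        sum_measure_dyadicInterval_le_sum_image_dyadicParent ν hS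
    _ ≤ (S.image (dyadicParent k)).card • ENNReal.ofReal ((1 / 2 ^ m : ℝ) ^ α) := by
        refine Finset.sum_le_card_nsmul _ _ _ fun t ht => ?_
        obtain ⟨j, hj, rfl⟩ := Finset.mem_image.1 ht
        exact hν m _ (by simp [dyadicParent]) (dyadicParent_le (hS hj).2)
    _ ≤ 3 • ENNReal.ofReal ((1 / 2 ^ m : ℝ) ^ α) :=
        nsmul_le_nsmul_left zero_le (card_image_dyadicParent_le_three k hspread)
    _ ≤ ENNReal.ofReal (3 * Metric.diam s ^ α) := by
        have : (1 / 2 ^ m : ℝ) ≤ Metric.diam s := by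
          rwa [div_le_iff₀ (by positivity), mul_comm]
        rw [nsmul_eq_mul, Nat.cast_ofNat, ← ENNReal.ofReal_ofNat 3,
          ← ENNReal.ofReal_mul (by norm_num)]
        gcongr

end Frostman

theorem stepApprox_frostman_general (ν : Measure ℝ)
    (α : ℝ) (hα : 0 < α)
    (hdy : ∀ n j : ℕ, 1 ≤ j → j ≤ 2 ^ n →
      ν (dyadicInterval n j) ≤ ENNReal.ofReal ((1 / 2 ^ n : ℝ) ^ α))
    (n : ℕ) (I : Set ℝ) (hI : I ⊆ Set.Icc (0 : ℝ) 1) :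
    (Metric.diam I < 1 / 2 ^ n →
        stepApprox ν n I ≤ ENNReal.ofReal ((1 / 2 ^ n : ℝ) ^ α)) ∧
      ((1 : ℝ) / 2 ^ n ≤ Metric.diam I →
        stepApprox ν n I ≤ ENNReal.ofReal (3 * Metric.diam I ^ α)) :=
  ⟨stepApprox_le_of_diam_lt (hdy n) (Metric.isBounded_Icc (0 : ℝ) 1 |>.subset hI),
    stepApprox_le_three_mul_diam_rpow hα.le hdy hI⟩

/-- If `ν(I) ≤ |I|^α` on every dyadic interval, then for its `n`-step approximation
`ν_n` and any interval `I ⊆ [0,1]`: `ν_n(I) ≤ 1/N^α` when `|I| < 1/N`, and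
`ν_n(I) ≤ 3·|I|^α` when `|I| ≥ 1/N` (where `N = 2^n`). -/
theorem stepApprox_frostman (ν : Measure ℝ) [IsFiniteMeasure ν]
    (α : ℝ) (hα : 0 < α) (hα1 : α ≤ 1)
    (hdy : ∀ n j : ℕ, 1 ≤ j → j ≤ 2 ^ n →
      ν (dyadicInterval n j) ≤ ENNReal.ofReal ((1 / 2 ^ n : ℝ) ^ α))
    (n : ℕ) (I : Set ℝ) (hI : I ⊆ Set.Icc (0 : ℝ) 1) (hconn : I.OrdConnected) :
    (Metric.diam I < 1 / 2 ^ n →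
        stepApprox ν n I ≤ ENNReal.ofReal ((1 / 2 ^ n : ℝ) ^ α)) ∧
      ((1 : ℝ) / 2 ^ n ≤ Metric.diam I →
        stepApprox ν n I ≤ ENNReal.ofReal (3 * Metric.diam I ^ α)) :=
  stepApprox_frostman_general ν α hα hdy n I hI
end

section
/- Let N ≥ 1 and let u > 0 satisfy u² ≤ √N and u ≥ √6. Then (cos(u/√N))^N ≤ exp(−u²/3). -/
/-- If `N ≥ 1`, `u > 0`, `u² ≤ √N` and `u ≥ √6`, then `(cos(u/√N))^N ≤ exp(-u²/3)`. -/
theorem cos_pow_le_exp (N : ℕ) (hN : 1 ≤ N) (u : ℝ) (hu : 0 < u)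
    (hu2 : u ^ 2 ≤ Real.sqrt N) (hu6 : Real.sqrt 6 ≤ u) :
    Real.cos (u / Real.sqrt N) ^ N ≤ Real.exp (-u ^ 2 / 3) := by
  have hN0 : (0:ℝ) < N := by exact_mod_cast hN
  have hsN : (0:ℝ) < Real.sqrt N := Real.sqrt_pos.mpr hN0
  set x : ℝ := u / Real.sqrt N with hx
  have hx0 : 0 < x := div_pos hu hsN
  have hsq : Real.sqrt N ^ 2 = (N:ℝ) := Real.sq_sqrt hN0.le
  have hx2 : x ^ 2 = u ^ 2 / N := by
    rw [hx, div_pow, hsq]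
  have hsN1 : Real.sqrt N ≤ (N:ℝ) := by
    nlinarith [hsq, sq_nonneg (Real.sqrt (N:ℝ) - 1), show (1:ℝ) ≤ N from by exact_mod_cast hN]
  have hx21 : x ^ 2 ≤ 1 := by
    rw [hx2]
    rw [div_le_one hN0]
    exact hu2.trans hsN1
  have hx1 : |x| ≤ 1 := by
    rw [abs_le]
    constructor <;> nlinarith
  have hbound := Real.cos_bound hx1
  have habs : |x| ^ 4 = x ^ 4 := by
    rw [← abs_pow, abs_of_nonneg (by positivity)]
  rw [abs_le, habs] at hbound
  have hcos_pos : 0 < Real.cos x := by nlinarith [hbound.1, hbound.2]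
  have hcle : Real.cos x ≤ Real.exp (-x ^ 2 / 2 + 5 / 96 * x ^ 4) := by
    have h1 : Real.cos x ≤ (-x ^ 2 / 2 + 5 / 96 * x ^ 4) + 1 := by nlinarith [hbound.2]
    exact h1.trans (Real.add_one_le_exp _)
  calc Real.cos x ^ N ≤ Real.exp (-x ^ 2 / 2 + 5 / 96 * x ^ 4) ^ N :=
        pow_le_pow_left₀ hcos_pos.le hcle N
    _ = Real.exp (N * (-x ^ 2 / 2 + 5 / 96 * x ^ 4)) := by
        rw [← Real.exp_nat_mul]
    _ ≤ Real.exp (-u ^ 2 / 3) := by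
        apply Real.exp_le_exp.mpr
        have hx4 : x ^ 4 = (u ^ 2 / N) ^ 2 := by
          rw [show x ^ 4 = (x ^ 2) ^ 2 by ring, hx2]
        rw [hx2, hx4]
        have h4 : u ^ 4 ≤ u ^ 2 * N := by nlinarith [hu2, hsN1, sq_nonneg u]
        have ht : u ^ 4 / N ≤ u ^ 2 := (div_le_iff₀ hN0).mpr h4
        have heq : (N:ℝ) * (-(u ^ 2 / N) / 2 + 5 / 96 * (u ^ 2 / N) ^ 2)
            = -u ^ 2 / 2 + 5 / 96 * (u ^ 4 / N) := by
          field_simp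
        rw [heq]
        nlinarith [ht]
end

section
/- Let 0 < a < 1, N ≥ 1, 0 < α ≤ 1, C > 0, and let μ be a finite positive measure on [0,1] satisfying μ([0,t]) ≤ 1/N^α for t ≤ 1/N and μ([0,t]) ≤ C·t^α for 1/N ≤ t ≤ 1, with μ([0,1]) ≤ 1. Then ∫_0^1 a^{Nt} dμ(t) ≤ a^N + (1−a)/N^α + C·Γ(α+1)/(N·log(1/a))^α. -/
/-!
Put `L = N log (1/a)`, so that `a^{Nt} = e^{-Lt}`. Since `e^{-Lt} - e^{-L} = ∫_t^1 L e^{-Ls} ds`,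
Tonelli gives `∫ (e^{-Lt} - e^{-L}) dμ(t) ≤ ∫_0^1 L e^{-Ls} μ([0,s]) ds`. On `(0, 1/N]` the bound
`μ([0,s]) ≤ N^{-α}` together with `∫_0^{1/N} L e^{-Ls} ds = 1 - a` gives the second term; on
`(1/N, 1]` the bound `μ([0,s]) ≤ C s^α`, after extending the integral to `(0, ∞)`, gives
`C L ∫_0^∞ s^α e^{-Ls} ds = C Γ(α+1) / L^α`.
-/

open MeasureTheory Set Real
open scoped ENNReal

section DistributionFunction

variable {μ : Measure ℝ} {a b : ℝ}

theorem lintegral_Icc_lintegral_Ioc_eq [SFinite μ] {g : ℝ → ℝ≥0∞} (hg : Measurable g) :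
    ∫⁻ t in Icc a b, (∫⁻ s in Ioc t b, g s) ∂μ = ∫⁻ s in Ioc a b, g s * μ (Ico a s) := by
  have hrestrict :
      ∀ t ∈ Icc a b, ∫⁻ s in Ioc t b, g s = ∫⁻ s in Ioc a b, (Ioi t).indicator g s := by
    intro t ht
    rw [lintegral_indicator measurableSet_Ioi, Measure.restrict_restrict measurableSet_Ioi,
      inter_comm, Ioc_inter_Ioi, max_eq_right ht.1]
  have hmeas : Measurable (Function.uncurry fun t s => (Ioi t).indicator g s) := by
    have : (Function.uncurry fun t s => (Ioi t).indicator g s)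
        = {p : ℝ × ℝ | p.1 < p.2}.indicator (fun p => g p.2) := by
      ext ⟨t, s⟩
      by_cases hts : t < s <;> simp [hts]
    rw [this]
    exact (hg.comp measurable_snd).indicator (measurableSet_lt measurable_fst measurable_snd)
  calc ∫⁻ t in Icc a b, (∫⁻ s in Ioc t b, g s) ∂μ
      = ∫⁻ t in Icc a b, (∫⁻ s in Ioc a b, (Ioi t).indicator g s) ∂μ :=
        setLIntegral_congr_fun measurableSet_Icc hrestrict
    _ = ∫⁻ s in Ioc a b, ∫⁻ t in Icc a b, (Ioi t).indicator g s ∂μ :=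
        lintegral_lintegral_swap hmeas.aemeasurable
    _ = ∫⁻ s in Ioc a b, g s * μ (Ico a s) := by
        refine setLIntegral_congr_fun measurableSet_Ioc fun s hs => ?_
        have hind : ∀ t, (Ioi t).indicator g s = (Iio s).indicator (fun _ => g s) t := by
          intro t
          by_cases hts : t < s <;> simp [hts]
        simp_rw [hind]
        rw [lintegral_indicator measurableSet_Iio, setLIntegral_const,
          Measure.restrict_apply measurableSet_Iio]
        congr 2
        ext t
        simp only [mem_inter_iff, mem_Iio, mem_Icc, mem_Ico]
        grind

variable {f g : ℝ → ℝ}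

theorem ofReal_sub_eq_lintegral_of_hasDerivAt_neg (hf : ∀ x, HasDerivAt f (-g x) x)
    (hg : Continuous g) (hab : a ≤ b) (hg0 : ∀ x ∈ Ioc a b, 0 ≤ g x) :
    ENNReal.ofReal (f a - f b) = ∫⁻ s in Ioc a b, ENNReal.ofReal (g s) := by
  have hftc : f a - f b = ∫ s in Ioc a b, g s := by
    rw [← intervalIntegral.integral_of_le hab, ← neg_sub,
      ← intervalIntegral.integral_eq_sub_of_hasDerivAt (fun x _ => hf x)
        (hg.neg.intervalIntegrable a b), intervalIntegral.integral_neg, neg_neg]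
  rw [hftc, ofReal_integral_eq_lintegral_ofReal]
  · exact (hg.continuousOn.integrableOn_Icc).mono_set Ioc_subset_Icc_self
  · exact ae_restrict_of_forall_mem measurableSet_Ioc hg0

theorem setLIntegral_ofReal_sub_le [SFinite μ] (hf : ∀ x, HasDerivAt f (-g x) x)
    (hg : Continuous g) (hg0 : ∀ x ∈ Ioc a b, 0 ≤ g x) :
    ∫⁻ t in Icc a b, ENNReal.ofReal (f t - f b) ∂μ
      ≤ ∫⁻ s in Ioc a b, ENNReal.ofReal (g s) * μ (Icc a s) := by
  calc ∫⁻ t in Icc a b, ENNReal.ofReal (f t - f b) ∂μ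
      = ∫⁻ t in Icc a b, (∫⁻ s in Ioc t b, ENNReal.ofReal (g s)) ∂μ :=
        setLIntegral_congr_fun measurableSet_Icc fun t ht =>
          ofReal_sub_eq_lintegral_of_hasDerivAt_neg hf hg ht.2 fun x hx =>
            hg0 x ⟨ht.1.trans_lt hx.1, hx.2⟩
    _ = ∫⁻ s in Ioc a b, ENNReal.ofReal (g s) * μ (Ico a s) :=
        lintegral_Icc_lintegral_Ioc_eq hg.measurable.ennreal_ofReal
    _ ≤ ∫⁻ s in Ioc a b, ENNReal.ofReal (g s) * μ (Icc a s) :=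
        lintegral_mono fun s => by gcongr; exact Ico_subset_Icc_self

theorem integral_le_toReal_lintegral_ofReal {X : Type*} [MeasurableSpace X] {ν : Measure X}
    {h : X → ℝ} (hh : Integrable h ν) :
    ∫ t, h t ∂ν ≤ (∫⁻ t, ENNReal.ofReal (h t) ∂ν).toReal := by
  rw [integral_eq_lintegral_pos_part_sub_lintegral_neg_part hh]
  exact sub_le_self _ ENNReal.toReal_nonneg

theorem setIntegral_Icc_le_of_lintegral_le [IsFiniteMeasure μ] (hf : ∀ x, HasDerivAt f (-g x) x)
    (hg : Continuous g) (hg0 : ∀ x ∈ Ioc a b, 0 ≤ g x) {B : ℝ} (hB0 : 0 ≤ B)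
    (hB : ∫⁻ s in Ioc a b, ENNReal.ofReal (g s) * μ (Icc a s) ≤ ENNReal.ofReal B) :
    ∫ t in Icc a b, f t ∂μ ≤ f b * μ.real (Icc a b) + B := by
  have hfint : IntegrableOn f (Icc a b) μ :=
    (continuous_iff_continuousAt.mpr fun x => (hf x).continuousAt).continuousOn.integrableOn_compact
      isCompact_Icc
  have hint : IntegrableOn (fun t => f t - f b) (Icc a b) μ := hfint.sub (integrableOn_const ..)
  have hsplit : ∫ t in Icc a b, f t ∂μ
      = ∫ t in Icc a b, (f t - f b) ∂μ + f b * μ.real (Icc a b) := by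
    rw [integral_sub hfint (integrableOn_const ..), setIntegral_const, smul_eq_mul]
    ring
  have hrest : ∫ t in Icc a b, (f t - f b) ∂μ ≤ B :=
    (integral_le_toReal_lintegral_ofReal hint).trans
      (ENNReal.toReal_le_of_le_ofReal hB0 ((setLIntegral_ofReal_sub_le hf hg hg0).trans hB))
  linarith

theorem setLIntegral_mul_le_of_le (hf : ∀ x, HasDerivAt f (-g x) x) (hg : Continuous g)
    (hab : a ≤ b) (hg0 : ∀ x ∈ Ioc a b, 0 ≤ g x) {m : ℝ → ℝ≥0∞} {M : ℝ≥0∞}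
    (hm : ∀ s ∈ Ioc a b, m s ≤ M) :
    ∫⁻ s in Ioc a b, ENNReal.ofReal (g s) * m s ≤ ENNReal.ofReal (f a - f b) * M := by
  calc ∫⁻ s in Ioc a b, ENNReal.ofReal (g s) * m s
      ≤ ∫⁻ s in Ioc a b, ENNReal.ofReal (g s) * M :=
        setLIntegral_mono (hg.measurable.ennreal_ofReal.mul_const M) fun s hs => by
          gcongr; exact hm s hs
    _ = ENNReal.ofReal (f a - f b) * M := by
        rw [lintegral_mul_const _ hg.measurable.ennreal_ofReal,
          ofReal_sub_eq_lintegral_of_hasDerivAt_neg hf hg hab hg0]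

end DistributionFunction

section ExponentialKernel

theorem rpow_mul_eq_exp_neg_mul {a : ℝ} (ha : 0 < a) (x t : ℝ) :
    a ^ (x * t) = exp (-(x * log (1 / a) * t)) := by
  rw [rpow_def_of_pos ha, one_div, log_inv]
  ring_nf

theorem hasDerivAt_exp_neg_mul (L t : ℝ) :
    HasDerivAt (fun t => exp (-(L * t))) (-(L * exp (-(L * t)))) t := by
  have := ((hasDerivAt_id t).const_mul L).neg.exp
  simpa [mul_comm] using this

variable {L : ℝ}

theorem lintegral_Ioi_ofReal_rpow_mul_exp_neg_mul {α : ℝ} (hα : -1 < α) (hL : 0 < L) :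
    ∫⁻ s in Ioi 0, ENNReal.ofReal (s ^ α * exp (-(L * s)))
      = ENNReal.ofReal (Gamma (α + 1) / L ^ (α + 1)) := by
  have hint : IntegrableOn (fun s : ℝ => s ^ α * exp (-(L * s))) (Ioi 0) := by
    simpa [neg_mul] using integrableOn_rpow_mul_exp_neg_mul_rpow hα one_pos hL
  rw [← ofReal_integral_eq_lintegral_ofReal hint (ae_restrict_of_forall_mem measurableSet_Ioi
    fun s hs => mul_nonneg (rpow_nonneg (le_of_lt hs) α) (exp_pos _).le)]
  have hΓ := integral_rpow_mul_exp_neg_mul_Ioi (show 0 < α + 1 by linarith) hL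
  rw [add_sub_cancel_right] at hΓ
  rw [hΓ, one_div, inv_rpow hL.le, inv_mul_eq_div]

theorem setLIntegral_exp_neg_mul_mul_le {α C c b : ℝ} (hL : 0 < L) (hα : -1 < α) (hC : 0 ≤ C)
    (hc : 0 ≤ c) {m : ℝ → ℝ≥0∞} (hm : ∀ s ∈ Ioc c b, m s ≤ ENNReal.ofReal (C * s ^ α)) :
    ∫⁻ s in Ioc c b, ENNReal.ofReal (L * exp (-(L * s))) * m s
      ≤ ENNReal.ofReal (C * Gamma (α + 1) / L ^ α) := by
  calc ∫⁻ s in Ioc c b, ENNReal.ofReal (L * exp (-(L * s))) * m s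
      ≤ ∫⁻ s in Ioc c b, ENNReal.ofReal (C * L) * ENNReal.ofReal (s ^ α * exp (-(L * s))) := by
        refine setLIntegral_mono (by fun_prop) fun s hs => ?_
        calc ENNReal.ofReal (L * exp (-(L * s))) * m s
            ≤ ENNReal.ofReal (L * exp (-(L * s))) * ENNReal.ofReal (C * s ^ α) := by
              gcongr; exact hm s hs
          _ = ENNReal.ofReal (C * L) * ENNReal.ofReal (s ^ α * exp (-(L * s))) := by
              rw [← ENNReal.ofReal_mul (by positivity), ← ENNReal.ofReal_mul (by positivity)]
              ring_nf
    _ ≤ ∫⁻ s in Ioi 0, ENNReal.ofReal (C * L) * ENNReal.ofReal (s ^ α * exp (-(L * s))) :=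
        lintegral_mono_set fun s hs => hc.trans_lt hs.1
    _ = ENNReal.ofReal (C * Gamma (α + 1) / L ^ α) := by
        rw [lintegral_const_mul _ (by fun_prop), lintegral_Ioi_ofReal_rpow_mul_exp_neg_mul hα hL,
          ← ENNReal.ofReal_mul (by positivity), rpow_add hL, rpow_one]
        congr 1
        field_simp

end ExponentialKernel

theorem integral_rpow_bound_general (a : ℝ) (ha0 : 0 < a) (ha1 : a < 1)
    (N : ℕ) (hN : 1 ≤ N) (α : ℝ) (hα : 0 < α) (C : ℝ) (hC : 0 < C)
    (μ : Measure ℝ) [IsFiniteMeasure μ]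
    (hsmall : ∀ t : ℝ, 0 ≤ t → t ≤ 1 / N → (μ (Set.Icc 0 t)).toReal ≤ 1 / (N : ℝ) ^ α)
    (hbig : ∀ t : ℝ, 1 / (N : ℝ) ≤ t → t ≤ 1 → (μ (Set.Icc 0 t)).toReal ≤ C * t ^ α)
    (htotal : (μ (Set.Icc (0 : ℝ) 1)).toReal ≤ 1) :
    ∫ t in Set.Icc (0 : ℝ) 1, a ^ ((N : ℝ) * t) ∂μ ≤
      a ^ (N : ℕ) + (1 - a) / (N : ℝ) ^ α +
        C * Real.Gamma (α + 1) / ((N : ℝ) * Real.log (1 / a)) ^ α := by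
  have hN0 : (0 : ℝ) < N := by exact_mod_cast hN
  have hN1 : 1 / (N : ℝ) ≤ 1 := by rw [div_le_one hN0]; exact_mod_cast hN
  set L := (N : ℝ) * log (1 / a)
  have hL : 0 < L := mul_pos hN0 (log_pos ((one_lt_div ha0).mpr ha1))
  have hmeasure : ∀ s, μ (Icc 0 s) = ENNReal.ofReal (μ.real (Icc 0 s)) := fun s =>
    (ENNReal.ofReal_toReal (measure_ne_top μ _)).symm
  have hsmallpart :
      ∫⁻ s in Ioc (0 : ℝ) (1 / N), ENNReal.ofReal (L * exp (-(L * s))) * μ (Icc 0 s)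
      ≤ ENNReal.ofReal ((1 - a) / (N : ℝ) ^ α) := by
    rw [div_eq_mul_one_div (1 - a), ENNReal.ofReal_mul (by linarith)]
    convert setLIntegral_mul_le_of_le (hasDerivAt_exp_neg_mul L) (by fun_prop) (by positivity)
      (fun s _ => by positivity) fun s hs => (hmeasure s).trans_le
        (ENNReal.ofReal_le_ofReal (hsmall s hs.1.le hs.2)) using 3
    rw [mul_zero, neg_zero, exp_zero, ← rpow_mul_eq_exp_neg_mul ha0, mul_one_div_cancel hN0.ne',
      rpow_one]
  have hbigpart :
      ∫⁻ s in Ioc (1 / (N : ℝ)) 1, ENNReal.ofReal (L * exp (-(L * s))) * μ (Icc 0 s)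
      ≤ ENNReal.ofReal (C * Gamma (α + 1) / L ^ α) :=
    setLIntegral_exp_neg_mul_mul_le hL (by linarith) hC.le (by positivity) fun s hs =>
      (hmeasure s).trans_le (ENNReal.ofReal_le_ofReal (hbig s hs.1.le hs.2))
  have hmass : exp (-(L * 1)) * μ.real (Icc 0 1) ≤ a ^ N := by
    rw [← rpow_mul_eq_exp_neg_mul ha0, mul_one, rpow_natCast]
    exact mul_le_of_le_one_right (by positivity) htotal
  calc ∫ t in Icc 0 1, a ^ ((N : ℝ) * t) ∂μ = ∫ t in Icc 0 1, exp (-(L * t)) ∂μ := by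
        simp only [rpow_mul_eq_exp_neg_mul ha0, L]
    _ ≤ exp (-(L * 1)) * μ.real (Icc 0 1)
          + ((1 - a) / (N : ℝ) ^ α + C * Gamma (α + 1) / L ^ α) := by
        refine setIntegral_Icc_le_of_lintegral_le (hasDerivAt_exp_neg_mul L) (by fun_prop)
          (fun s _ => by positivity) (by positivity) ?_
        rw [← Ioc_union_Ioc_eq_Ioc (by positivity) hN1,
          lintegral_union measurableSet_Ioc (Ioc_disjoint_Ioc_of_le le_rfl),
          ENNReal.ofReal_add (by positivity) (by positivity)]
        exact add_le_add hsmallpart hbigpart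
    _ ≤ _ := by linarith

/-- Bound on `∫_0^1 a^{Nt} dμ(t)` for a finite measure `μ` on `[0,1]` satisfying
Frostman-type bounds: `∫ a^{Nt} dμ ≤ a^N + (1-a)/N^α + C·Γ(α+1)/(N log(1/a))^α`. -/
theorem integral_rpow_bound (a : ℝ) (ha0 : 0 < a) (ha1 : a < 1)
    (N : ℕ) (hN : 1 ≤ N) (α : ℝ) (hα : 0 < α) (hα1 : α ≤ 1) (C : ℝ) (hC : 0 < C)
    (μ : Measure ℝ) [IsFiniteMeasure μ]
    (hsmall : ∀ t : ℝ, 0 ≤ t → t ≤ 1 / N → (μ (Set.Icc 0 t)).toReal ≤ 1 / (N : ℝ) ^ α)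
    (hbig : ∀ t : ℝ, 1 / (N : ℝ) ≤ t → t ≤ 1 → (μ (Set.Icc 0 t)).toReal ≤ C * t ^ α)
    (htotal : (μ (Set.Icc (0 : ℝ) 1)).toReal ≤ 1) :
    ∫ t in Set.Icc (0 : ℝ) 1, a ^ ((N : ℝ) * t) ∂μ ≤
      a ^ (N : ℕ) + (1 - a) / (N : ℝ) ^ α +
        C * Real.Gamma (α + 1) / ((N : ℝ) * Real.log (1 / a)) ^ α :=
  integral_rpow_bound_general a ha0 ha1 N hN α hα C hC μ hsmall hbig htotal
end
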